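/- Let ℛ = ℤ³ (a lattice in ℝ³) and B = [-1/2,1/2)³ its fundamental domain. Then the series Σ_{k∈ℛ} ∫_B ( 1/|k+q|² − 𝟙(k≠0)/|k|² ) dq converges absolutely. -/

import Mathlib

open Matrix MeasureTheory Set

namespace Stmt4Aux

/-! ### Elementary inequalities -/

lemma abs_u_le {a u v : ℝ} (ha : 3 ≤ a) (hv0 : 0 ≤ v) (hv : v ≤ 3/4)
    (hu : u^2 ≤ 4*a*v) : |u| ≤ 3/4*a + v := by
  have h1 : (0:ℝ) ≤ 9/4*a - v := by linarith
  have h2 : (0:ℝ) ≤ a/4 - v := by linarith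
  rw [abs_le]
  constructor
  · nlinarith [mul_nonneg h1 h2, sq_nonneg (u + (3/4*a + v))]
  · nlinarith [mul_nonneg h1 h2, sq_nonneg (u - (3/4*a + v))]

lemma key_ineq {a u v : ℝ} (ha : 3 ≤ a) (hv0 : 0 ≤ v) (hv : v ≤ 3/4)
    (hu : u^2 ≤ 4*a*v) :
    |(a+u+v)⁻¹ + (a-u+v)⁻¹ - 2*a⁻¹| ≤ 144/a^2 := by
  have ha0 : (0:ℝ) < a := by linarith
  have habs := abs_u_le ha hv0 hv hu
  rw [abs_le] at habs
  have hd1 : a/4 ≤ a + u + v := by linarith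
  have hd2 : a/4 ≤ a - u + v := by linarith
  have hp1 : (0:ℝ) < a + u + v := by linarith
  have hp2 : (0:ℝ) < a - u + v := by linarith
  have hE : (a+u+v)⁻¹ + (a-u+v)⁻¹ - 2*a⁻¹
      = (2*(u^2 - v*(a+v))) / ((a+u+v)*((a-u+v)*a)) := by
    field_simp
    ring
  rw [hE, abs_div]
  have hDpos : (0:ℝ) < (a+u+v)*((a-u+v)*a) := by positivity
  rw [abs_of_pos hDpos]
  have hD : a^3/16 ≤ (a+u+v)*((a-u+v)*a) := by
    have h12 : (a/4)*(a/4) ≤ (a+u+v)*(a-u+v) :=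
      mul_le_mul hd1 hd2 (by positivity) (by linarith)
    nlinarith [h12]
  have hN : |2*(u^2 - v*(a+v))| ≤ 9*a := by
    rw [abs_le]
    constructor <;> nlinarith
  calc |2*(u^2 - v*(a+v))| / ((a+u+v)*((a-u+v)*a))
      ≤ (9*a) / (a^3/16) := by
        apply div_le_div₀ (by positivity) hN (by positivity) hD
    _ = 144/a^2 := by field_simp; ring

/-! ### The closed fundamental cube and dot-product facts -/

def C3 : Set (Fin 3 → ℝ) := Set.univ.pi fun _ : Fin 3 => Set.Icc (-(1:ℝ)/2) (1/2)

lemma mem_C3 {q : Fin 3 → ℝ} (hq : q ∈ C3) (i : Fin 3) :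
    -(1:ℝ)/2 ≤ q i ∧ q i ≤ 1/2 := by
  have := hq i (Set.mem_univ i)
  simpa using this

lemma neg_mem_C3 {q : Fin 3 → ℝ} (hq : q ∈ C3) : -q ∈ C3 := by
  intro i _
  have h := mem_C3 hq i
  simp only [Pi.neg_apply, Set.mem_Icc]
  constructor <;> linarith [h.1, h.2]

lemma dot_expand (k q : Fin 3 → ℝ) :
    (k + q) ⬝ᵥ (k + q) = k ⬝ᵥ k + 2*(k ⬝ᵥ q) + q ⬝ᵥ q := by
  simp [dotProduct, Fin.sum_univ_three]; ring

lemma cs (k q : Fin 3 → ℝ) : (2*(k ⬝ᵥ q))^2 ≤ 4*(k ⬝ᵥ k)*(q ⬝ᵥ q) := by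
  simp only [dotProduct, Fin.sum_univ_three]
  nlinarith [sq_nonneg (k 0*q 1 - k 1*q 0), sq_nonneg (k 0*q 2 - k 2*q 0),
    sq_nonneg (k 1*q 2 - k 2*q 1)]

lemma v_bounds {q : Fin 3 → ℝ} (hq : q ∈ C3) : 0 ≤ q ⬝ᵥ q ∧ q ⬝ᵥ q ≤ 3/4 := by
  have h0 := mem_C3 hq 0
  have h1 := mem_C3 hq 1
  have h2 := mem_C3 hq 2
  simp only [dotProduct, Fin.sum_univ_three]
  constructor <;> nlinarith [h0.1, h0.2, h1.1, h1.2, h2.1, h2.2]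

lemma denom_pos (K : Fin 3 → ℝ) (ha : 3 ≤ K ⬝ᵥ K) {q : Fin 3 → ℝ} (hq : q ∈ C3) :
    0 < (K + q) ⬝ᵥ (K + q) := by
  have hv := v_bounds hq
  have habs := abs_u_le ha hv.1 hv.2 (cs K q)
  rw [abs_le] at habs
  rw [dot_expand]
  linarith [habs.1]

lemma pointwise (K : Fin 3 → ℝ) (ha : 3 ≤ K ⬝ᵥ K) {q : Fin 3 → ℝ} (hq : q ∈ C3) :
    |((K + q) ⬝ᵥ (K + q))⁻¹ + ((K + (-q)) ⬝ᵥ (K + (-q)))⁻¹ - 2*(K ⬝ᵥ K)⁻¹|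
      ≤ 144/(K ⬝ᵥ K)^2 := by
  have h2 : (K + (-q)) ⬝ᵥ (K + (-q)) = K ⬝ᵥ K - 2*(K ⬝ᵥ q) + q ⬝ᵥ q := by
    rw [dot_expand K (-q)]
    simp only [dotProduct, Fin.sum_univ_three, Pi.neg_apply]
    ring
  rw [dot_expand K q, h2]
  have hv := v_bounds hq
  exact key_ineq ha hv.1 hv.2 (cs K q)

/-! ### The bound on each term of the lattice sum -/

lemma volume_C3 : volume C3 = 1 := by
  rw [C3, volume_pi_pi]
  norm_num

lemma term_bound (K : Fin 3 → ℝ) (ha : 3 ≤ K ⬝ᵥ K) :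
    |∫ q in Set.univ.pi fun _ : Fin 3 => Set.Ico (-(1:ℝ)/2) (1/2),
      (((K + q) ⬝ᵥ (K + q))⁻¹ - (K ⬝ᵥ K)⁻¹)| ≤ 72/(K ⬝ᵥ K)^2 := by
  have ha0 : (0:ℝ) < K ⬝ᵥ K := by linarith
  set h : (Fin 3 → ℝ) → ℝ := fun q => ((K + q) ⬝ᵥ (K + q))⁻¹ - (K ⬝ᵥ K)⁻¹ with hh
  have hBC : (Set.univ.pi fun _ : Fin 3 => Set.Ico (-(1:ℝ)/2) (1/2)) =ᵐ[volume] C3 := by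
    rw [volume_pi]
    exact Measure.pi_Ico_ae_eq_pi_Icc
  rw [setIntegral_congr_set hBC]
  have hcompact : IsCompact C3 := isCompact_univ_pi fun _ => isCompact_Icc
  have hcont : Continuous fun q : Fin 3 → ℝ => (K + q) ⬝ᵥ (K + q) := by
    simp only [dotProduct, Pi.add_apply]
    exact continuous_finset_sum _ fun i _ =>
      ((continuous_const.add (continuous_apply i)).mul
        (continuous_const.add (continuous_apply i)))
  have hInt1 : IntegrableOn h C3 := by
    apply ContinuousOn.integrableOn_compact hcompact
    exact (hcont.continuousOn.inv₀ fun q hq => (denom_pos K ha hq).ne').sub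
      continuousOn_const
  have hInt2 : IntegrableOn (fun q => h (-q)) C3 := by
    apply ContinuousOn.integrableOn_compact hcompact
    exact (((hcont.comp continuous_neg).continuousOn.inv₀
      fun q hq => (denom_pos K ha (neg_mem_C3 hq)).ne').sub continuousOn_const)
  have hpre : (fun q : Fin 3 → ℝ => -q) ⁻¹' C3 = C3 := by
    ext q
    simp only [Set.mem_preimage]
    exact ⟨fun hq => by simpa using neg_mem_C3 hq, fun hq => neg_mem_C3 hq⟩
  have hsym : ∫ q in C3, h q = ∫ q in C3, h (-q) := by
    have hmp : MeasurePreserving (fun q : Fin 3 → ℝ => -q) volume volume :=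
      Measure.measurePreserving_neg _
    have := hmp.setIntegral_preimage_emb measurableEmbedding_neg h C3
    rw [hpre] at this
    exact this.symm
  have hdouble : (2:ℝ) * ∫ q in C3, h q = ∫ q in C3, (h q + h (-q)) := by
    rw [integral_add hInt1 hInt2, ← hsym]
    ring
  have hbound : |∫ q in C3, (h q + h (-q))| ≤ 144/(K ⬝ᵥ K)^2 * (volume C3).toReal := by
    rw [← Real.norm_eq_abs]
    apply norm_setIntegral_le_of_norm_le_const (by rw [volume_C3]; exact ENNReal.one_lt_top)
    · intro q hq
      rw [Real.norm_eq_abs]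
      have he : h q + h (-q) = ((K + q) ⬝ᵥ (K + q))⁻¹
          + ((K + (-q)) ⬝ᵥ (K + (-q)))⁻¹ - 2*(K ⬝ᵥ K)⁻¹ := by
        simp only [hh]; ring
      rw [he]
      exact pointwise K ha hq
  rw [volume_C3] at hbound
  simp only [ENNReal.toReal_one, mul_one] at hbound
  have h2 : |(2:ℝ) * ∫ q in C3, h q| ≤ 144/(K ⬝ᵥ K)^2 := by rw [hdouble]; exact hbound
  rw [abs_mul, abs_two] at h2
  have h72 : 72/(K ⬝ᵥ K)^2 = (144/(K ⬝ᵥ K)^2)/2 := by ring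
  rw [h72]
  linarith

/-! ### A summable majorant on `ℤ³` -/

noncomputable def g1 : ℤ → ℝ := fun m => (1 + (m:ℝ)^2) ^ (-(2/3) : ℝ)

lemma g1_nonneg (m : ℤ) : 0 ≤ g1 m := Real.rpow_nonneg (by positivity) _

lemma summable_g1 : Summable g1 := by
  have hs := Real.summable_abs_int_rpow (show (1:ℝ) < 4/3 by norm_num)
  apply Summable.of_norm_bounded_eventually hs
  filter_upwards [(Set.finite_singleton (0:ℤ)).eventually_cofinite_notMem] with m hm
  have hm0 : (m:ℝ) ≠ 0 := Int.cast_ne_zero.2 (by simpa using hm)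
  have hsq : (0:ℝ) < (m:ℝ)^2 := by positivity
  rw [Real.norm_eq_abs, abs_of_nonneg (g1_nonneg m)]
  calc g1 m ≤ ((m:ℝ)^2) ^ (-(2/3):ℝ) :=
        Real.rpow_le_rpow_of_nonpos hsq (by linarith) (by norm_num)
    _ = |(m:ℝ)| ^ (-(4/3):ℝ) := by
        rw [← sq_abs, ← Real.rpow_natCast |(m:ℝ)| 2, ← Real.rpow_mul (abs_nonneg _)]
        norm_num

def e3 : (Fin 3 → ℤ) ≃ ℤ × ℤ × ℤ where
  toFun k := (k 0, k 1, k 2)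
  invFun p := ![p.1, p.2.1, p.2.2]
  left_inv k := by funext i; fin_cases i <;> simp
  right_inv p := rfl

lemma summable_g : Summable (fun k : Fin 3 → ℤ => ∏ i, g1 (k i)) := by
  have h2 : Summable (fun p : ℤ × ℤ => g1 p.1 * g1 p.2) :=
    summable_g1.mul_of_nonneg summable_g1 g1_nonneg g1_nonneg
  have h3 : Summable (fun p : ℤ × ℤ × ℤ => g1 p.1 * (g1 p.2.1 * g1 p.2.2)) :=
    summable_g1.mul_of_nonneg h2 g1_nonneg
      (fun p => mul_nonneg (g1_nonneg _) (g1_nonneg _))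
  rw [← Equiv.summable_iff e3.symm]
  refine h3.congr fun p => ?_
  simp only [Function.comp_apply, Fin.prod_univ_three, mul_assoc]; rfl

lemma majorant (k : Fin 3 → ℤ)
    (ha : (3:ℝ) ≤ (fun i => (k i:ℝ)) ⬝ᵥ (fun i => (k i:ℝ))) :
    72/((fun i => (k i:ℝ)) ⬝ᵥ (fun i => (k i:ℝ)))^2 ≤ 128 * ∏ i, g1 (k i) := by
  set a : ℝ := (fun i => (k i:ℝ)) ⬝ᵥ (fun i => (k i:ℝ)) with hadef
  have ha0 : (0:ℝ) < a := by linarith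
  have hki : ∀ i, ((k i:ℝ))^2 ≤ a := by
    intro i
    have := Finset.single_le_sum (f := fun j => ((k j:ℝ))^2)
      (fun j _ => sq_nonneg _) (Finset.mem_univ i)
    calc ((k i:ℝ))^2 ≤ ∑ j, ((k j:ℝ))^2 := this
      _ = a := by simp [hadef, dotProduct, sq]
  have hprod : ∏ i, (1 + ((k i:ℝ))^2) ≤ (1+a)^3 := by
    calc ∏ i, (1 + ((k i:ℝ))^2) ≤ ∏ _i : Fin 3, (1+a) :=
          Finset.prod_le_prod (fun i _ => by positivity)
            (fun i _ => by linarith [hki i])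
      _ = (1+a)^3 := by simp
  have hstep : ((1+a)^3 : ℝ) ^ (-(2/3):ℝ) ≤ ∏ i, g1 (k i) := by
    simp only [g1]
    exact le_trans
      (Real.rpow_le_rpow_of_nonpos (by positivity) hprod (by norm_num))
      (le_of_eq (Real.finset_prod_rpow _ _ (fun i _ => by positivity) _).symm)
  have heq : ((1+a)^3 : ℝ) ^ (-(2/3):ℝ) = ((1+a)^2)⁻¹ := by
    rw [← Real.rpow_natCast (1+a) 3, ← Real.rpow_mul (by positivity)]
    norm_num
  calc 72/a^2 ≤ 128/(1+a)^2 := by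
        rw [div_le_div_iff₀ (by positivity) (by positivity)]; nlinarith
    _ = 128 * ((1+a)^2)⁻¹ := by ring
    _ ≤ 128 * ∏ i, g1 (k i) := by
        apply mul_le_mul_of_nonneg_left _ (by norm_num)
        rw [← heq]; exact hstep

end Stmt4Aux

open Stmt4Aux in
/-- Absolute convergence of the lattice sum
`Σ_{k∈ℤ³} ∫_B (1/|k+q|² − 𝟙(k≠0)/|k|²) dq`, where `B = [-1/2,1/2)³`. -/
theorem stmt4 :
    Summable (fun k : Fin 3 → ℤ =>
      |∫ q in Set.univ.pi fun _ : Fin 3 => Set.Ico (-(1 : ℝ)/2) (1/2),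
        ((((fun i => (k i : ℝ)) + q) ⬝ᵥ ((fun i => (k i : ℝ)) + q))⁻¹
          - if k = 0 then 0
            else (((fun i => (k i : ℝ)) ⬝ᵥ (fun i => (k i : ℝ)))⁻¹))|) := by
  classical
  have hTfin : (Set.Icc (fun _ => (-1:ℤ)) (fun _ => (1:ℤ)) : Set (Fin 3 → ℤ)).Finite :=
    Set.finite_Icc _ _
  refine Summable.of_norm_bounded_eventually (g := fun k => 128 * ∏ i, g1 (k i))
    (summable_g.mul_left 128) ?_
  filter_upwards [hTfin.eventually_cofinite_notMem] with k hk
  have hk0 : k ≠ 0 := by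
    rintro rfl
    exact hk ⟨fun i => by norm_num, fun i => by norm_num⟩
  have ha3 : (3:ℝ) ≤ (fun i => (k i:ℝ)) ⬝ᵥ (fun i => (k i:ℝ)) := by
    obtain ⟨i, hi⟩ : ∃ i, 1 < |k i| := by
      by_contra hcon
      push_neg at hcon
      exact hk ⟨fun i => (abs_le.1 (hcon i)).1, fun i => (abs_le.1 (hcon i)).2⟩
    have h2 : (2:ℝ) ≤ |(k i:ℝ)| := by
      have : (2:ℤ) ≤ |k i| := hi
      calc (2:ℝ) = ((2:ℤ):ℝ) := by norm_num
        _ ≤ ((|k i| : ℤ) : ℝ) := by exact_mod_cast this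
        _ = |(k i:ℝ)| := by push_cast; rfl
    have h4 : (4:ℝ) ≤ ((k i:ℝ))^2 := by nlinarith [abs_nonneg (k i:ℝ), sq_abs (k i:ℝ)]
    have hsum := Finset.single_le_sum (f := fun j => ((k j:ℝ))^2)
      (fun j _ => sq_nonneg _) (Finset.mem_univ i)
    calc (3:ℝ) ≤ 4 := by norm_num
      _ ≤ ((k i:ℝ))^2 := h4
      _ ≤ ∑ j, ((k j:ℝ))^2 := hsum
      _ = (fun i => (k i:ℝ)) ⬝ᵥ (fun i => (k i:ℝ)) := by simp [dotProduct, sq]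
  rw [Real.norm_eq_abs, abs_abs]
  simp only [if_neg hk0]
  exact (term_bound (fun i => (k i:ℝ)) ha3).trans (majorant k ha3)
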